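/- For all m ≥ 0, ∑_{n=0}^{m} (-1)^n n!/(n+1) · S(m,n) = B_m, where S(m,n) are the Stirling numbers of the second kind and B_m the Bernoulli numbers. -/

import Mathlib

open PowerSeries Finset

noncomputable def logOneAdd : PowerSeries ℚ :=
  PowerSeries.mk fun k => if k = 0 then 0 else (-1 : ℚ)^(k+1) / k

noncomputable def onePow (x : ℚ) : PowerSeries ℚ :=
  PowerSeries.mk fun k => (∏ i ∈ Finset.range k, (x - (i : ℚ))) / (Nat.factorial k : ℚ)

noncomputable def expX (x : ℚ) : PowerSeries ℚ :=
  PowerSeries.mk fun k => x ^ k / (Nat.factorial k : ℚ)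

/-!
Composing `log (1 + X)` with `exp X - 1` gives `X`: both sides vanish at `0` and, by the chain
rule, have derivative `exp X / (1 + (exp X - 1)) = 1`. Hence the Bernoulli series
`X / (exp X - 1)` is `L (exp X - 1)` for `L = log (1 + X) / X = ∑ (-1)^n X^n / (n + 1)`.
Expanding `(exp X - 1)^n = n! ∑ S(m, n) X^m / m!` and reading off the coefficient of `X^m`
gives the formula; only `n ≤ m` contribute since `(exp X - 1)^n` has order `n`.
-/

namespace PowerSeries

theorem coeff_pow_of_lt {R : Type*} [Semiring R] {φ : R⟦X⟧} (hφ : constantCoeff φ = 0)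
    {m n : ℕ} (h : m < n) : coeff m (φ ^ n) = 0 :=
  coeff_of_lt_order m ((Nat.cast_lt.mpr h).trans_le (le_order_pow_of_constantCoeff_eq_zero n hφ))

theorem coeff_subst_eq_sum_range {R : Type*} [CommRing R] (f : R⟦X⟧) {g : R⟦X⟧}
    (hg : constantCoeff g = 0) (m : ℕ) :
    coeff m (f.subst g) = ∑ n ∈ range (m + 1), coeff n f * coeff m (g ^ n) := by
  have hsupp : (Function.support fun n => coeff n f • coeff m (g ^ n)) ⊆ range (m + 1) := by
    intro n hn
    by_contra h
    rw [coe_range, Set.mem_Iio, not_lt] at h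
    simp [coeff_pow_of_lt hg h] at hn
  rw [coeff_subst' (HasSubst.of_constantCoeff_zero' hg), finsum_eq_sum_of_support_subset _ hsupp]
  simp only [smul_eq_mul]

theorem mk_neg_one_pow_mul_one_add_X {R : Type*} [CommRing R] :
    (mk fun n => (-1 : R) ^ n) * (1 + X) = 1 := by
  ext (_ | n)
  · simp
  · simp [mul_add, pow_succ]

variable (A : Type*) [CommRing A] [Algebra ℚ A]

theorem log_subst_exp_sub_one : (log A).subst (exp A - 1) = X := by
  have : IsAddTorsionFree A := .of_module_rat A
  have hu : HasSubst (exp A - 1) := HasSubst.exp_sub_one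
  refine derivative.ext ?_ ?_
  · have hgeom := congrArg (substAlgHom hu) (mk_neg_one_pow_mul_one_add_X (R := A))
    rw [map_mul, map_add, map_one, substAlgHom_X, coe_substAlgHom, add_sub_cancel] at hgeom
    rw [derivative_subst hu, deriv_log, map_sub, derivative_exp, derivative_one, sub_zero,
      derivative_X]
    simpa using hgeom
  · rw [← coeff_zero_eq_constantCoeff_apply, coeff_subst_eq_sum_range _ (by simp)]
    simp

def logDivX : A⟦X⟧ := mk fun n => algebraMap ℚ A ((-1) ^ n / (n + 1))

theorem X_mul_logDivX : X * logDivX A = log A := by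
  ext (_ | n)
  · simp
  · simp [logDivX, pow_succ]

variable {A}

theorem eq_logDivX_subst_of_mul_exp_sub_one_eq_X {f : A⟦X⟧} (hf : f * (exp A - 1) = X) :
    f = (logDivX A).subst (exp A - 1) := by
  have hu : HasSubst (exp A - 1) := HasSubst.exp_sub_one
  have h := congrArg (subst (exp A - 1)) (X_mul_logDivX A)
  rw [subst_mul hu, subst_X hu, log_subst_exp_sub_one] at h
  refine mul_X_cancel ?_
  calc f * X = f * (exp A - 1) * (logDivX A).subst (exp A - 1) := by rw [mul_assoc, h]
    _ = (logDivX A).subst (exp A - 1) * X := by rw [hf, mul_comm]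

end PowerSeries

theorem bernoulli_explicit_stirling2 (B : ℕ → ℚ) (S : ℕ → ℕ → ℚ)
    (hB : PowerSeries.mk (fun l => B l / (Nat.factorial l : ℚ)) * (PowerSeries.exp ℚ - 1) = PowerSeries.X) (hS : ∀ n : ℕ, (PowerSeries.exp ℚ - 1) ^ n = PowerSeries.C (Nat.factorial n : ℚ) * PowerSeries.mk (fun m => S m n / (Nat.factorial m : ℚ))) :
    ∀ m : ℕ, ∑ n ∈ Finset.range (m + 1),
        (-1 : ℚ) ^ n * (Nat.factorial n : ℚ) / (n + 1 : ℚ) * S m n = B m := by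
  intro m
  have hBm := congrArg (coeff m) (eq_logDivX_subst_of_mul_exp_sub_one_eq_X hB)
  rw [coeff_mk, coeff_subst_eq_sum_range _ (by simp), div_eq_iff (by positivity)] at hBm
  rw [hBm, sum_mul]
  refine sum_congr rfl fun n _ => ?_
  rw [hS n, coeff_C_mul, coeff_mk, logDivX, coeff_mk, Algebra.algebraMap_self, RingHom.id_apply]
  field_simp
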